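/- arXiv:1208.3267 — 2 statements merged into one kernel-verified Lean document; each statement's English description precedes it below -/
import Mathlib

section
/- For fixed real numbers a and b, the ratio Γ(z+a)/Γ(z+b) is asymptotic to z^{a-b} as z → ∞ along the positive real axis; that is, lim_{z→∞} (Γ(z+a)/Γ(z+b)) / z^{a-b} = 1. -/
/-!
`log ∘ Γ` is convex on `(0, ∞)` and rises by `log y` from `y` to `y + 1`. Comparing the slope of
its secant over `[z + b, z + a]` with those over the adjacent unit intervals squeezes
`log Γ(z + a) - log Γ(z + b)` between `(a - b) log (z + b - 1)` and `(a - b) log (z + a)`, and both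
bounds differ from `(a - b) log z` by `o(1)`.
-/

open Filter Real Set Topology

lemma log_Gamma_add_one {x : ℝ} (hx : 0 < x) :
    log (Gamma (x + 1)) = log (Gamma x) + log x := by
  rw [Gamma_add_one hx.ne', log_mul hx.ne' (Gamma_pos_of_pos hx).ne', add_comm]

lemma log_Gamma_add_le {x s : ℝ} (hx : 0 < x) (hs : 0 ≤ s) :
    log (Gamma (x + s)) ≤ log (Gamma x) + s * log (x + s) := by
  rcases hs.eq_or_lt with rfl | hs
  · simp
  have hslope := convexOn_log_Gamma.slope_mono_adjacent (mem_Ioi.2 hx)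
    (mem_Ioi.2 (by linarith : 0 < x + s + 1)) (by linarith : x < x + s) (by linarith)
  simp only [Function.comp_apply, add_sub_cancel_left, div_one,
    log_Gamma_add_one (by linarith : 0 < x + s)] at hslope
  rw [div_le_iff₀ hs] at hslope
  linarith

lemma le_log_Gamma_add {x s : ℝ} (hx : 1 < x) (hs : 0 ≤ s) :
    log (Gamma x) + s * log (x - 1) ≤ log (Gamma (x + s)) := by
  rcases hs.eq_or_lt with rfl | hs
  · simp
  have hslope := convexOn_log_Gamma.slope_mono_adjacent (mem_Ioi.2 (by linarith : 0 < x - 1))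
    (mem_Ioi.2 (by linarith : 0 < x + s)) (by linarith : x - 1 < x) (by linarith : x < x + s)
  have hstep := log_Gamma_add_one (by linarith : 0 < x - 1)
  rw [sub_add_cancel] at hstep
  simp only [Function.comp_apply, sub_sub_cancel, div_one, add_sub_cancel_left, hstep] at hslope
  rw [le_div_iff₀ hs] at hslope
  linarith

lemma tendsto_log_add_div_self_atTop (c : ℝ) :
    Tendsto (fun z : ℝ => log ((z + c) / z)) atTop (𝓝 0) := by
  have hratio : Tendsto (fun z : ℝ => 1 + c * z⁻¹) atTop (𝓝 1) := by
    simpa using (tendsto_inv_atTop_zero.const_mul c).const_add 1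
  rw [← log_one]
  refine ((continuousAt_log one_ne_zero).tendsto.comp hratio).congr' ?_
  filter_upwards [eventually_gt_atTop 0] with z hz
  simp only [Function.comp_apply]
  congr 1
  field_simp

theorem tendsto_log_Gamma_add_sub_log_Gamma_add (a b : ℝ) :
    Tendsto (fun z : ℝ => log (Gamma (z + a)) - log (Gamma (z + b)) - (a - b) * log z)
      atTop (𝓝 0) := by
  wlog hba : b ≤ a generalizing a b
  · simpa using (this b a (le_of_not_ge hba)).neg |>.congr fun z => by ring
  have hlower := (tendsto_log_add_div_self_atTop (b - 1)).const_mul (a - b)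
  have hupper := (tendsto_log_add_div_self_atTop a).const_mul (a - b)
  rw [mul_zero] at hlower hupper
  refine tendsto_of_tendsto_of_tendsto_of_le_of_le' hlower hupper ?_ ?_
  all_goals
    filter_upwards [eventually_gt_atTop (1 - b), eventually_gt_atTop 0] with z hzb hz
    have hsum : z + b + (a - b) = z + a := by ring
    rw [log_div (by linarith) hz.ne', mul_sub]
  · have := le_log_Gamma_add (by linarith : 1 < z + b) (sub_nonneg.2 hba)
    rw [hsum] at this
    rw [← add_sub_assoc]
    linarith
  · have := log_Gamma_add_le (by linarith : 0 < z + b) (sub_nonneg.2 hba)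
    rw [hsum] at this
    linarith

/-- For fixed reals `a` and `b`, `Γ(z+a)/Γ(z+b) ~ z^(a-b)` as `z → ∞`
along the positive reals:  `(Γ(z+a)/Γ(z+b)) / z^(a-b) → 1`. -/
theorem gamma_ratio_asymptotic (a b : ℝ) :
    Filter.Tendsto
      (fun z : ℝ => Real.Gamma (z + a) / Real.Gamma (z + b) / z ^ (a - b))
      Filter.atTop (nhds 1) := by
  have h := (tendsto_log_Gamma_add_sub_log_Gamma_add a b).rexp
  rw [exp_zero] at h
  refine h.congr' ?_
  filter_upwards [eventually_gt_atTop (max 0 (max (-a) (-b)))] with z hz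
  simp only [max_lt_iff] at hz
  have hGa := Gamma_pos_of_pos (by linarith : 0 < z + a)
  have hGb := Gamma_pos_of_pos (by linarith : 0 < z + b)
  rw [exp_sub, exp_sub, exp_log hGa, exp_log hGb, mul_comm, ← rpow_def_of_pos hz.1]
end

section
/- Let g : (0,∞) → [0,∞) be measurable with g(τ) ≤ M for 0 < τ < 1, and suppose (1/Γ(s)) ∫_0^∞ τ^{s−1} e^{−τ} g(τ) dτ = ε^s where 0 < ε < 1 and s > s' > d/2. Suppose furthermore τ^{d/2} g(τ) ≤ c ε^{d/2} for all 0 < τ < ε/2. Then (1/Γ(s')) ∫_0^∞ τ^{s'−1} e^{−τ} g(τ) dτ ≤ [Γ(s)/Γ(s') + 2^{s−s'} Γ(s)/Γ(s') + c/(Γ(s')(s'−d/2))]·ε^{s'}. -/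
open MeasureTheory Set Real

/-! Split the integral at `ε/2`. On `(0, ε/2)` the pointwise bound gives
`τ^{s'-1} e^{-τ} g(τ) ≤ c ε^{d/2} τ^{(s'-d/2)-1}`, which integrates to at most
`c ε^{s'} / (s'-d/2)` because `s' > d/2`. On `[ε/2, ∞)` we have
`τ^{s'-1} ≤ (ε/2)^{s'-s} τ^{s-1}`, so that part is at most
`(ε/2)^{s'-s} Γ(s) ε^s = 2^{s-s'} Γ(s) ε^{s'}`. -/

theorem setIntegral_Ioo_zero_rpow_sub_one {a r : ℝ} (ha : 0 ≤ a) (hr : 0 < r) :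
    ∫ τ in Ioo 0 a, τ ^ (r - 1) = a ^ r / r := by
  rw [← integral_Ioc_eq_integral_Ioo, ← intervalIntegral.integral_of_le ha,
    integral_rpow (Or.inl (by linarith)), sub_add_cancel, zero_rpow hr.ne', sub_zero]

theorem integrableOn_Ioo_zero_rpow_sub_one {a r : ℝ} (ha : 0 ≤ a) (hr : 0 < r) :
    IntegrableOn (fun τ : ℝ => τ ^ (r - 1)) (Ioo 0 a) := by
  rw [← intervalIntegrable_iff_integrableOn_Ioo_of_le ha]
  exact intervalIntegral.intervalIntegrable_rpow' (by linarith)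

section NearZero

variable {F : ℝ → ℝ} {a C r : ℝ}

theorem integrableOn_Ioo_zero_of_le_rpow (ha : 0 ≤ a) (hr : 0 < r)
    (hF : AEStronglyMeasurable F (volume.restrict (Ioo 0 a)))
    (hF0 : ∀ τ ∈ Ioo 0 a, 0 ≤ F τ) (hFle : ∀ τ ∈ Ioo 0 a, F τ ≤ C * τ ^ (r - 1)) :
    IntegrableOn F (Ioo 0 a) := by
  refine Integrable.mono' ((integrableOn_Ioo_zero_rpow_sub_one ha hr).const_mul C) hF ?_
  filter_upwards [ae_restrict_mem measurableSet_Ioo] with τ hτ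
  rw [Real.norm_of_nonneg (hF0 τ hτ)]
  exact hFle τ hτ

theorem setIntegral_Ioo_zero_le_of_le_rpow (ha : 0 ≤ a) (hr : 0 < r)
    (hF0 : ∀ τ ∈ Ioo 0 a, 0 ≤ F τ) (hFle : ∀ τ ∈ Ioo 0 a, F τ ≤ C * τ ^ (r - 1)) :
    ∫ τ in Ioo 0 a, F τ ≤ C * (a ^ r / r) := by
  rw [← setIntegral_Ioo_zero_rpow_sub_one ha hr, ← integral_const_mul]
  refine integral_mono_of_nonneg ?_ ((integrableOn_Ioo_zero_rpow_sub_one ha hr).const_mul C) ?_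
  · filter_upwards [ae_restrict_mem measurableSet_Ioo] with τ hτ using hF0 τ hτ
  · filter_upwards [ae_restrict_mem measurableSet_Ioo] with τ hτ using hFle τ hτ

end NearZero

section Tail

variable {w : ℝ → ℝ} {a p q : ℝ}

theorem rpow_sub_one_le_mul_rpow_sub_one {τ : ℝ} (ha : 0 < a) (hτ : a ≤ τ) (hpq : p ≤ q) :
    τ ^ (p - 1) ≤ a ^ (p - q) * τ ^ (q - 1) := by
  have hτ0 : 0 < τ := ha.trans_le hτ
  calc τ ^ (p - 1) = τ ^ (p - q) * τ ^ (q - 1) := by rw [← rpow_add hτ0]; ring_nf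
    _ ≤ a ^ (p - q) * τ ^ (q - 1) := mul_le_mul_of_nonneg_right
        (rpow_le_rpow_of_nonpos ha hτ (by linarith)) (rpow_nonneg hτ0.le _)

theorem integrableOn_Ici_rpow_mul (ha : 0 < a) (hpq : p ≤ q) (hw : Measurable w)
    (hw0 : ∀ τ, 0 < τ → 0 ≤ w τ) (hint : IntegrableOn (fun τ => τ ^ (q - 1) * w τ) (Ioi 0)) :
    IntegrableOn (fun τ => τ ^ (p - 1) * w τ) (Ici a) := by
  have hsub : Ici a ⊆ Ioi 0 := fun τ hτ => ha.trans_le hτ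
  refine Integrable.mono' ((hint.mono_set hsub).const_mul (a ^ (p - q)))
    (by fun_prop : Measurable fun τ => τ ^ (p - 1) * w τ).aestronglyMeasurable ?_
  filter_upwards [ae_restrict_mem measurableSet_Ici] with τ hτ
  rw [Real.norm_of_nonneg (mul_nonneg (rpow_nonneg (hsub hτ).le _) (hw0 τ (hsub hτ))),
    ← mul_assoc]
  exact mul_le_mul_of_nonneg_right (rpow_sub_one_le_mul_rpow_sub_one ha hτ hpq) (hw0 τ (hsub hτ))

theorem setIntegral_Ici_rpow_mul_le (ha : 0 < a) (hpq : p ≤ q) (hw0 : ∀ τ, 0 < τ → 0 ≤ w τ)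
    (hint : IntegrableOn (fun τ => τ ^ (q - 1) * w τ) (Ioi 0)) :
    ∫ τ in Ici a, τ ^ (p - 1) * w τ ≤ a ^ (p - q) * ∫ τ in Ioi 0, τ ^ (q - 1) * w τ := by
  have hsub : Ici a ⊆ Ioi 0 := fun τ hτ => ha.trans_le hτ
  calc ∫ τ in Ici a, τ ^ (p - 1) * w τ
      ≤ ∫ τ in Ici a, a ^ (p - q) * (τ ^ (q - 1) * w τ) := by
        refine integral_mono_of_nonneg ?_ ((hint.mono_set hsub).const_mul _) ?_
        · filter_upwards [ae_restrict_mem measurableSet_Ici] with τ hτ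
          exact mul_nonneg (rpow_nonneg (hsub hτ).le _) (hw0 τ (hsub hτ))
        · filter_upwards [ae_restrict_mem measurableSet_Ici] with τ hτ
          rw [← mul_assoc]
          exact mul_le_mul_of_nonneg_right (rpow_sub_one_le_mul_rpow_sub_one ha hτ hpq)
            (hw0 τ (hsub hτ))
    _ = a ^ (p - q) * ∫ τ in Ici a, τ ^ (q - 1) * w τ := integral_const_mul _ _
    _ ≤ a ^ (p - q) * ∫ τ in Ioi 0, τ ^ (q - 1) * w τ := by
        refine mul_le_mul_of_nonneg_left (setIntegral_mono_set hint ?_ hsub.eventuallyLE)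
          (rpow_nonneg ha.le _)
        filter_upwards [ae_restrict_mem measurableSet_Ioi] with τ hτ
        exact mul_nonneg (rpow_nonneg (le_of_lt hτ) _) (hw0 τ hτ)

end Tail

theorem setIntegral_Ioi_rpow_mul_le {w : ℝ → ℝ} {a p q r C : ℝ} (ha : 0 < a) (hr : 0 < r)
    (hpq : p ≤ q) (hw : Measurable w) (hw0 : ∀ τ, 0 < τ → 0 ≤ w τ)
    (hint : IntegrableOn (fun τ => τ ^ (q - 1) * w τ) (Ioi 0))
    (hsmall : ∀ τ ∈ Ioo 0 a, τ ^ (p - 1) * w τ ≤ C * τ ^ (r - 1)) :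
    ∫ τ in Ioi 0, τ ^ (p - 1) * w τ
      ≤ C * (a ^ r / r) + a ^ (p - q) * ∫ τ in Ioi 0, τ ^ (q - 1) * w τ := by
  have hF0 : ∀ τ ∈ Ioo 0 a, 0 ≤ τ ^ (p - 1) * w τ := fun τ hτ =>
    mul_nonneg (rpow_nonneg hτ.1.le _) (hw0 τ hτ.1)
  have hsplit : ∫ τ in Ioi 0, τ ^ (p - 1) * w τ
      = (∫ τ in Ioo 0 a, τ ^ (p - 1) * w τ) + ∫ τ in Ici a, τ ^ (p - 1) * w τ := by
    rw [← Ioo_union_Ici_eq_Ioi ha]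
    exact setIntegral_union ((Iio_disjoint_Ici le_rfl).mono_left Ioo_subset_Iio_self) measurableSet_Ici
      (integrableOn_Ioo_zero_of_le_rpow ha.le hr (by fun_prop) hF0 hsmall)
      (integrableOn_Ici_rpow_mul ha hpq hw hw0 hint)
  rw [hsplit]
  exact add_le_add (setIntegral_Ioo_zero_le_of_le_rpow ha.le hr hF0 hsmall)
    (setIntegral_Ici_rpow_mul_le ha hpq hw0 hint)

theorem rpow_sub_one_mul_exp_neg_mul_le {τ x b p K : ℝ} (hτ : 0 < τ) (hx : 0 ≤ x)
    (h : τ ^ b * x ≤ K) : τ ^ (p - 1) * (exp (-τ) * x) ≤ K * τ ^ (p - b - 1) := by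
  have hexp : exp (-τ) ≤ 1 := exp_le_one_iff.mpr (by linarith)
  calc τ ^ (p - 1) * (exp (-τ) * x) ≤ τ ^ (p - 1) * x := by
        gcongr
        exact mul_le_of_le_one_left hx hexp
    _ = τ ^ (p - b - 1) * (τ ^ b * x) := by rw [← mul_assoc, ← rpow_add hτ]; ring_nf
    _ ≤ K * τ ^ (p - b - 1) := by rw [mul_comm K]; gcongr

theorem div_two_rpow_sub_mul_rpow {ε p q : ℝ} (hε : 0 < ε) :
    (ε / 2) ^ (p - q) * ε ^ q = 2 ^ (q - p) * ε ^ p := by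
  rw [div_rpow hε.le zero_le_two, div_eq_mul_inv, ← rpow_neg zero_le_two, neg_sub,
    mul_right_comm, mul_comm, ← rpow_add hε, sub_add_cancel]

theorem rpow_mul_div_two_rpow_sub_le {ε b p : ℝ} (hε : 0 < ε) (hbp : b ≤ p) :
    ε ^ b * (ε / 2) ^ (p - b) ≤ ε ^ p := by
  calc ε ^ b * (ε / 2) ^ (p - b) ≤ ε ^ b * ε ^ (p - b) := by
        gcongr
        linarith
    _ = ε ^ p := by rw [← rpow_add hε, add_sub_cancel]

theorem kernel_splitting_estimate_general (d s s' ε cst : ℝ)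
    (hd : 0 < d) (hs' : d / 2 < s') (hss : s' < s)
    (hε0 : 0 < ε) (hcst : 0 ≤ cst)
    (g : ℝ → ℝ) (hgmeas : Measurable g) (hg0 : ∀ τ : ℝ, 0 < τ → 0 ≤ g τ)
    (hint : IntegrableOn (fun τ : ℝ => τ ^ (s - 1) * Real.exp (-τ) * g τ) (Set.Ioi 0))
    (heq : (1 / Real.Gamma s) *
        ∫ τ in Set.Ioi (0 : ℝ), τ ^ (s - 1) * Real.exp (-τ) * g τ = ε ^ s)
    (hpt : ∀ τ : ℝ, 0 < τ → τ < ε / 2 → τ ^ (d / 2) * g τ ≤ cst * ε ^ (d / 2)) :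
    (1 / Real.Gamma s') * ∫ τ in Set.Ioi (0 : ℝ), τ ^ (s' - 1) * Real.exp (-τ) * g τ
      ≤ (Real.Gamma s / Real.Gamma s' + 2 ^ (s - s') * Real.Gamma s / Real.Gamma s'
          + cst / (Real.Gamma s' * (s' - d / 2))) * ε ^ s' := by
  have hr : 0 < s' - d / 2 := by linarith
  have hΓs : 0 < Gamma s := Gamma_pos_of_pos (by linarith)
  have hΓs' : 0 < Gamma s' := Gamma_pos_of_pos (by linarith)
  have hIs : ∫ τ in Ioi 0, τ ^ (s - 1) * exp (-τ) * g τ = Gamma s * ε ^ s := by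
    rw [← heq]; field_simp
  have hsplit := setIntegral_Ioi_rpow_mul_le (w := fun τ => exp (-τ) * g τ) (half_pos hε0) hr
    hss.le (by fun_prop) (fun τ hτ => mul_nonneg (exp_nonneg _) (hg0 τ hτ))
    (by simpa only [mul_assoc] using hint)
    (fun τ hτ => rpow_sub_one_mul_exp_neg_mul_le hτ.1 (hg0 τ hτ.1) (hpt τ hτ.1 hτ.2))
  simp only [← mul_assoc, hIs] at hsplit
  have hnear : cst * ε ^ (d / 2) * ((ε / 2) ^ (s' - d / 2) / (s' - d / 2))
      ≤ cst / (s' - d / 2) * ε ^ s' := by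
    calc _ = cst / (s' - d / 2) * (ε ^ (d / 2) * (ε / 2) ^ (s' - d / 2)) := by ring
      _ ≤ _ := by gcongr; exact rpow_mul_div_two_rpow_sub_le hε0 hs'.le
  have htail := div_two_rpow_sub_mul_rpow (p := s') (q := s) hε0
  calc 1 / Gamma s' * ∫ τ in Ioi 0, τ ^ (s' - 1) * exp (-τ) * g τ
      ≤ 1 / Gamma s' * (cst / (s' - d / 2) * ε ^ s' + 2 ^ (s - s') * Gamma s * ε ^ s') := by
        gcongr
        linear_combination hsplit + hnear + Gamma s * htail
    _ ≤ Gamma s / Gamma s' * ε ^ s'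
          + 1 / Gamma s' * (cst / (s' - d / 2) * ε ^ s' + 2 ^ (s - s') * Gamma s * ε ^ s') :=
        le_add_of_nonneg_left (by positivity)
    _ = _ := by field_simp; ring

/-- The core splitting estimate of Lemma 9.1: let `g ≥ 0` be measurable with `g ≤ M` on
`(0,1)`, `(1/Γ(s))∫_0^∞ τ^{s-1}e^{-τ}g(τ)dτ = ε^s` with `0 < ε < 1` and `s > s' > d/2`,
and `τ^{d/2}g(τ) ≤ c·ε^{d/2}` for `0 < τ < ε/2`.  Then
`(1/Γ(s'))∫_0^∞ τ^{s'-1}e^{-τ}g(τ)dτ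
  ≤ (Γ(s)/Γ(s') + 2^{s-s'}Γ(s)/Γ(s') + c/(Γ(s')(s'-d/2)))·ε^{s'}`. -/
theorem kernel_splitting_estimate (d s s' ε cst M : ℝ)
    (hd : 0 < d) (hs' : d / 2 < s') (hss : s' < s)
    (hε0 : 0 < ε) (hε1 : ε < 1) (hcst : 0 ≤ cst) (hM : 0 ≤ M)
    (g : ℝ → ℝ) (hgmeas : Measurable g) (hg0 : ∀ τ : ℝ, 0 < τ → 0 ≤ g τ)
    (hgM : ∀ τ : ℝ, 0 < τ → τ < 1 → g τ ≤ M)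
    (hint : IntegrableOn (fun τ : ℝ => τ ^ (s - 1) * Real.exp (-τ) * g τ) (Set.Ioi 0))
    (heq : (1 / Real.Gamma s) *
        ∫ τ in Set.Ioi (0 : ℝ), τ ^ (s - 1) * Real.exp (-τ) * g τ = ε ^ s)
    (hpt : ∀ τ : ℝ, 0 < τ → τ < ε / 2 → τ ^ (d / 2) * g τ ≤ cst * ε ^ (d / 2)) :
    (1 / Real.Gamma s') * ∫ τ in Set.Ioi (0 : ℝ), τ ^ (s' - 1) * Real.exp (-τ) * g τ
      ≤ (Real.Gamma s / Real.Gamma s' + 2 ^ (s - s') * Real.Gamma s / Real.Gamma s'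
          + cst / (Real.Gamma s' * (s' - d / 2))) * ε ^ s' :=
  kernel_splitting_estimate_general d s s' ε cst hd hs' hss hε0 hcst g hgmeas hg0 hint heq hpt
end
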